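/- Let H be a connected graph with at least two vertices and u ∈ V(H), and let r > g ≥ 4. Let G be the graph obtained by joining u to the pendant vertex of U_{r,g}^l by an edge, and let G' be the graph obtained by joining u to the pendant vertex of U_{r,3}^l by an edge. Then ε(G) < ε(G'). -/

import Mathlib

open SimpleGraph

/-- The eccentricity of a vertex: maximum distance to any vertex. -/
noncomputable def ecc {V : Type*} (G : SimpleGraph V) (v : V) : ℕ :=
  ⨆ u, G.dist v u

/-- The total eccentricity index: sum of eccentricities of all vertices. -/
noncomputable def totalEcc {V : Type*} [Fintype V] (G : SimpleGraph V) : ℕ :=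
  ∑ v, ecc G v

/-- A pendant vertex: a vertex of degree one, i.e. with exactly one neighbour. -/
def IsPendant {V : Type*} (G : SimpleGraph V) (v : V) : Prop :=
  ∃! u, G.Adj v u

/-- A cut vertex: a vertex whose removal disconnects the graph. -/
def IsCutVertex {V : Type*} (G : SimpleGraph V) (w : V) : Prop :=
  ¬ (G.induce {v | v ≠ w}).Connected

/-- distance between two subgraphs -/
noncomputable def subgraphDist {V : Type*} (G : SimpleGraph V) (B B' : G.Subgraph) : ℕ :=
  sInf {d | ∃ u ∈ B.verts, ∃ w ∈ B'.verts, G.dist u w = d}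

/-- A 2-connected subgraph: at least two vertices, connected, and no cut vertex. -/
def TwoConn {V : Type*} {G : SimpleGraph V} (H : G.Subgraph) : Prop :=
  2 ≤ H.verts.ncard ∧ H.coe.Connected ∧ ∀ w, ¬ IsCutVertex H.coe w

/-- A block: a maximal 2-connected subgraph. -/
def IsBlock {V : Type*} {G : SimpleGraph V} (H : G.Subgraph) : Prop :=
  TwoConn H ∧ ∀ H' : G.Subgraph, H ≤ H' → TwoConn H' → H' = H

/-- A pendant block: a block containing exactly one cut vertex of `G`. -/
def IsPendantBlock {V : Type*} (G : SimpleGraph V) (H : G.Subgraph) : Prop :=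
  ∃! w, w ∈ H.verts ∧ IsCutVertex G w

/-- `G_{k,l}`: the graph obtained from `G` by attaching two new paths,
with `k` resp. `l` new vertices, at the vertex `v`. -/
def attachTwoPaths {V : Type*} (G : SimpleGraph V) (v : V) (k l : ℕ) :
    SimpleGraph (V ⊕ (Fin k ⊕ Fin l)) :=
  SimpleGraph.fromRel (fun p q =>
    match p, q with
    | .inl x, .inl y => G.Adj x y
    | .inl x, .inr (.inl i) => x = v ∧ i.val = 0
    | .inl x, .inr (.inr i) => x = v ∧ i.val = 0
    | .inr (.inl i), .inr (.inl j) => i.val + 1 = j.val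
    | .inr (.inr i), .inr (.inr j) => i.val + 1 = j.val
    | _, _ => False)

/-- The graph obtained from `H1`, `H2` and the path `P_d = v_1 v_2 … v_d` by identifying
`u ∈ V(H1)`, `v ∈ V(H2)` and `v_1` into a single vertex.  The `Fin (d-1)` part records the
path vertices `v_2, …, v_d`. -/
def glueMid {V1 V2 : Type*} (H1 : SimpleGraph V1) (H2 : SimpleGraph V2)
    (u : V1) (v : V2) (d : ℕ) :
    SimpleGraph (V1 ⊕ ({x : V2 // x ≠ v} ⊕ Fin (d - 1))) :=
  SimpleGraph.fromRel (fun p q =>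
    match p, q with
    | .inl x, .inl y => H1.Adj x y
    | .inl x, .inr (.inl y) => x = u ∧ H2.Adj v y.1
    | .inl x, .inr (.inr i) => x = u ∧ i.val = 0
    | .inr (.inl x), .inr (.inl y) => H2.Adj x.1 y.1
    | .inr (.inr i), .inr (.inr j) => i.val + 1 = j.val
    | _, _ => False)

/-- The graph obtained from `H1`, `H2` and the path `P_d = v_1 v_2 … v_d` by identifying
`u ∈ V(H1)` with `v_1` and `v ∈ V(H2)` with `v_d`.  The `Fin (d-1)` part records the path
vertices `v_2, …, v_d` (the last one being identified with `v`). -/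
def glueEnds {V1 V2 : Type*} (H1 : SimpleGraph V1) (H2 : SimpleGraph V2)
    (u : V1) (v : V2) (d : ℕ) :
    SimpleGraph (V1 ⊕ ({x : V2 // x ≠ v} ⊕ Fin (d - 1))) :=
  SimpleGraph.fromRel (fun p q =>
    match p, q with
    | .inl x, .inl y => H1.Adj x y
    | .inl x, .inr (.inr i) => x = u ∧ i.val = 0
    | .inr (.inl x), .inr (.inl y) => H2.Adj x.1 y.1
    | .inr (.inr i), .inr (.inl y) => i.val + 1 = d - 1 ∧ H2.Adj v y.1
    | .inr (.inr i), .inr (.inr j) => i.val + 1 = j.val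
    | _, _ => False)

/-- `U_{n,g}^l`: the unicyclic graph on `n` vertices obtained by joining one end vertex of
the path `P_{n-g}` to a vertex of the cycle `C_g` by an edge. -/
def UnlGraph (n g : ℕ) : SimpleGraph (Fin (n - g) ⊕ Fin g) :=
  SimpleGraph.fromRel (fun p q =>
    match p, q with
    | .inl i, .inl j => i.val + 1 = j.val
    | .inl i, .inr j => i.val + 1 = n - g ∧ j.val = 0
    | .inr i, .inr j => i.val + 1 = j.val ∨ (i.val = 0 ∧ j.val + 1 = g)
    | _, _ => False)

/-- `U_{n,g}^p`: the unicyclic graph on `n` vertices obtained by attaching `n - g` pendant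
vertices to one vertex of the cycle `C_g`. -/
def UnpGraph (n g : ℕ) : SimpleGraph (Fin g ⊕ Fin (n - g)) :=
  SimpleGraph.fromRel (fun p q =>
    match p, q with
    | .inl i, .inl j => i.val + 1 = j.val ∨ (i.val = 0 ∧ j.val + 1 = g)
    | .inl i, .inr _ => i.val = 0
    | _, _ => False)

/-- The graph obtained by joining the vertex `u` of `H` to the pendant vertex of
`U_{r,g}^l` by an edge. -/
def joinPendant {V : Type*} (H : SimpleGraph V) (u : V) (r g : ℕ) :
    SimpleGraph (V ⊕ (Fin (r - g) ⊕ Fin g)) :=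
  SimpleGraph.fromRel (fun p q =>
    match p, q with
    | .inl x, .inl y => H.Adj x y
    | .inl x, .inr (.inl i) => x = u ∧ i.val = 0
    | .inr a, .inr b => (UnlGraph r g).Adj a b
    | _, _ => False)

/-- `C_{m1,m2}^n` in the case `n = m1 + m2 - 1`: two cycles `C_{m1}` and `C_{m2}`
sharing exactly one vertex (the vertex `0`). -/
def twoCyclesGlued (m1 m2 : ℕ) : SimpleGraph (Fin (m1 + m2 - 1)) :=
  SimpleGraph.fromRel (fun i j =>
    (i.val + 1 = j.val ∧ j.val < m1) ∨ (i.val = 0 ∧ j.val + 1 = m1)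
    ∨ (i.val = 0 ∧ j.val = m1) ∨ (m1 ≤ i.val ∧ i.val + 1 = j.val)
    ∨ (i.val = 0 ∧ j.val + 2 = m1 + m2))

/-- `C_{3,3}^n` for `n > 5`: two triangles `{0,1,2}` and `{n-3,n-2,n-1}` joined by the path
`2, 3, …, n-3` (a path on `n - 4` vertices whose ends are identified with a vertex of each
triangle). -/
def C33 (n : ℕ) : SimpleGraph (Fin n) :=
  SimpleGraph.fromRel (fun i j =>
    (i.val = 0 ∧ j.val = 1) ∨ (i.val = 0 ∧ j.val = 2) ∨ (i.val = 1 ∧ j.val = 2)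
    ∨ (2 ≤ i.val ∧ i.val + 1 = j.val ∧ j.val + 3 ≤ n)
    ∨ (i.val + 3 = n ∧ j.val + 2 = n) ∨ (i.val + 2 = n ∧ j.val + 1 = n)
    ∨ (i.val + 3 = n ∧ j.val + 1 = n))

/-- `T(l, m, d)`: the tree obtained from the path `P_d` by attaching `l` pendant vertices at
one end and `m` pendant vertices at the other end. -/
def Tlmd (l m d : ℕ) : SimpleGraph (Fin d ⊕ (Fin l ⊕ Fin m)) :=
  SimpleGraph.fromRel (fun p q =>
    match p, q with
    | .inl i, .inl j => i.val + 1 = j.val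
    | .inl i, .inr (.inl _) => i.val = 0
    | .inl i, .inr (.inr _) => i.val + 1 = d
    | _, _ => False)

/-- `K_m^n(l_1, …, l_m)`: the graph obtained from the complete graph `K_m` by identifying,
for each `i`, one end vertex of a path on `l i` vertices with the `i`-th vertex of `K_m`.
The vertex `⟨i, 0⟩` is the `i`-th vertex of the complete graph. -/
def Kmn (m : ℕ) (l : Fin m → ℕ) : SimpleGraph ((i : Fin m) × Fin (l i)) :=
  SimpleGraph.fromRel (fun p q =>
    (p.1 = q.1 ∧ p.2.val + 1 = q.2.val) ∨ (p.1 ≠ q.1 ∧ p.2.val = 0 ∧ q.2.val = 0))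

/-- The graph obtained from `H`, `C_{m1}` and `C_{m2}` by identifying the vertex `w` of `H`,
a vertex of `C_{m1}` and a vertex of `C_{m2}` into one vertex. -/
def glueTwoCycles {V : Type*} (H : SimpleGraph V) (w : V) (m1 m2 : ℕ) :
    SimpleGraph (V ⊕ (Fin (m1 - 1) ⊕ Fin (m2 - 1))) :=
  SimpleGraph.fromRel (fun p q =>
    match p, q with
    | .inl x, .inl y => H.Adj x y
    | .inl x, .inr (.inl i) => x = w ∧ (i.val = 0 ∨ i.val + 2 = m1)
    | .inl x, .inr (.inr i) => x = w ∧ (i.val = 0 ∨ i.val + 2 = m2)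
    | .inr (.inl i), .inr (.inl j) => i.val + 1 = j.val
    | .inr (.inr i), .inr (.inr j) => i.val + 1 = j.val
    | _, _ => False)

/-- The graph obtained from `H` and the cycle `C_M` by identifying the vertex `w` of `H`
with one vertex of the cycle. -/
def glueOneCycle {V : Type*} (H : SimpleGraph V) (w : V) (M : ℕ) :
    SimpleGraph (V ⊕ Fin (M - 1)) :=
  SimpleGraph.fromRel (fun p q =>
    match p, q with
    | .inl x, .inl y => H.Adj x y
    | .inl x, .inr i => x = w ∧ (i.val = 0 ∨ i.val + 2 = M)
    | .inr i, .inr j => i.val + 1 = j.val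
    | _, _ => False)

/-!
Both graphs consist of `H` and the line `u = ℓ₀, ℓ₁, …, ℓ_r` (the path of `U_{r,g}^l` followed by
the cycle `c₀, …, c_{g-1}`), plus the chord `ℓ_{r-g+1} ℓ_r = c₀ c_{g-1}` closing the cycle.
Compare the vertices of `G` and `G'` at the same position. In `G`, walks along the line and
through the chord bound every eccentricity from above. In `G'`, functions that change by at most
one along edges bound the distances to a vertex of `H` farthest from `u`, and to `ℓ_{r-1}`, from
below. The bounds match position by position, and at `ℓ_r = c_{g-1}` the chord makes the
eccentricity in `G` strictly smaller: there `u` is only `r - g + 2 < r - 1` steps away.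
-/

open SimpleGraph Finset

section General
variable {V : Type*} {G : SimpleGraph V}

lemma ecc_le_of_forall_dist_le [Nonempty V] {v : V} {b : ℕ} (h : ∀ y, G.dist v y ≤ b) :
    ecc G v ≤ b :=
  ciSup_le h

lemma dist_le_ecc [Finite V] (v y : V) : G.dist v y ≤ ecc G v :=
  le_ciSup (Set.finite_range _).bddAbove y

lemma exists_dist_eq_ecc [Finite V] [Nonempty V] (v : V) :
    ∃ w, G.dist v w = ecc G v :=
  exists_eq_ciSup_of_finite

lemma one_le_ecc [Finite V] [Nontrivial V] (hG : G.Connected) (v : V) : 1 ≤ ecc G v := by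
  obtain ⟨y, hy⟩ := exists_ne v
  exact (hG.pos_dist_of_ne hy.symm).trans_le (dist_le_ecc v y)

lemma dist_le_dist_add_one_of_adj {x y : V} (w : V) (h : G.Adj x y) :
    G.dist x w ≤ G.dist y w + 1 := by
  rw [dist_comm, dist_comm (u := y)]
  rcases h.symm.diff_dist_adj (u := w) with h | h | h <;> omega

lemma le_add_dist_of_adj_le (W : V → ℕ) (hW : ∀ a b, G.Adj a b → W a ≤ W b + 1) {x y : V}
    (h : G.Reachable x y) : W x ≤ W y + G.dist x y := by
  obtain ⟨p, hp⟩ := h.exists_walk_length_eq_dist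
  rw [← hp]
  clear hp h
  induction p with
  | nil => simp
  | cons hadj _ ih =>
    rw [Walk.length_cons]
    have := hW _ _ hadj
    omega

lemma dist_map_le {W : Type*} {G' : SimpleGraph W} (f : G →g G') {x y : V}
    (h : G.Reachable x y) : G'.dist (f x) (f y) ≤ G.dist x y := by
  obtain ⟨p, hp⟩ := h.exists_walk_length_eq_dist
  exact hp ▸ (p.length_map f) ▸ dist_le (p.map f)

lemma exists_walk_length_of_adj_succ (f : ℕ → V) {n : ℕ}
    (hf : ∀ m < n, G.Adj (f m) (f (m + 1))) {i j : ℕ} (hij : i ≤ j) (hjn : j ≤ n) :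
    ∃ p : G.Walk (f i) (f j), p.length = j - i := by
  obtain ⟨k, rfl⟩ := Nat.exists_eq_add_of_le hij
  induction k with
  | zero => exact ⟨.nil, by simp⟩
  | succ k ih =>
    obtain ⟨p, hp⟩ := ih (by omega) (by omega)
    exact ⟨p.concat (hf (i + k) (by omega)), by simp [hp]⟩

lemma dist_le_of_adj_succ (f : ℕ → V) {n : ℕ} (hf : ∀ m < n, G.Adj (f m) (f (m + 1)))
    {i j : ℕ} (hij : i ≤ j) (hjn : j ≤ n) : G.dist (f i) (f j) ≤ j - i := by
  obtain ⟨p, hp⟩ := exists_walk_length_of_adj_succ f hf hij hjn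
  exact hp ▸ dist_le p

end General

namespace JoinPendant
variable {V : Type*} {H : SimpleGraph V} {u : V} {r g : ℕ}

def linePos (r g : ℕ) : Fin (r - g) ⊕ Fin g → ℕ :=
  Sum.elim (fun i => i + 1) (fun j => r - g + j + 1)

/-- `ℓ_m`: the vertex `u` at `m = 0`, the path at `1, …, r - g`, the cycle at `r - g + 1, …, r`
(junk beyond `r`). -/
def lineVert (u : V) (r g : ℕ) : ℕ → V ⊕ (Fin (r - g) ⊕ Fin g)
  | 0 => .inl u
  | m + 1 =>
    if hp : m < r - g then .inr (.inl ⟨m, hp⟩)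
    else if hc : m - (r - g) < g then .inr (.inr ⟨m - (r - g), hc⟩)
    else .inl u

lemma lineVert_linePos (a : Fin (r - g) ⊕ Fin g) :
    lineVert u r g (linePos r g a) = .inr a := by
  rcases a with i | j <;> simp [linePos, lineVert]

lemma exists_lineVert_eq_inr {m : ℕ} (hm : m < r) :
    ∃ a, lineVert u r g (m + 1) = .inr a ∧ linePos r g a = m + 1 := by
  by_cases hp : m < r - g
  · exact ⟨.inl ⟨m, hp⟩, by simp [lineVert, hp], rfl⟩
  · have hc : m - (r - g) < g := by omega
    exact ⟨.inr ⟨m - (r - g), hc⟩, by simp [lineVert, hp, hc], by simp [linePos]; omega⟩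

lemma linePos_mem_Icc (hgr : g ≤ r) (a : Fin (r - g) ⊕ Fin g) :
    linePos r g a ∈ Set.Icc 1 r := by
  rcases a with i | j <;> simp only [linePos, Sum.elim_inl, Sum.elim_inr, Set.mem_Icc] <;> omega

lemma sum_linePos {M : Type*} [AddCommMonoid M] (hgr : g ≤ r) (F : ℕ → M) :
    ∑ a, F (linePos r g a) = ∑ m ∈ range r, F (m + 1) := by
  rw [Fintype.sum_sum_type]
  simp only [linePos, Sum.elim_inl, Sum.elim_inr]
  rw [Fin.sum_univ_eq_sum_range (fun i => F (i + 1)),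
    Fin.sum_univ_eq_sum_range (fun j => F (r - g + j + 1)), ← sum_range_add,
    Nat.sub_add_cancel hgr]

lemma adj_inl {x y : V} (h : H.Adj x y) : (joinPendant H u r g).Adj (.inl x) (.inl y) := by
  simp [joinPendant, h, h.ne]

def inlHom : H →g joinPendant H u r g := ⟨Sum.inl, adj_inl⟩

lemma adj_lineVert_succ (hgr : g < r) {m : ℕ} (hm : m < r) :
    (joinPendant H u r g).Adj (lineVert u r g m) (lineVert u r g (m + 1)) := by
  rcases m with _ | m
  · simp [joinPendant, lineVert, show 0 < r - g by omega]
  · simp only [lineVert]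
    split_ifs <;> simp [joinPendant, UnlGraph, Fin.ext_iff] <;> omega

lemma adj_chord (hg : 3 ≤ g) (hgr : g ≤ r) :
    (joinPendant H u r g).Adj (lineVert u r g (r - g + 1)) (lineVert u r g r) := by
  obtain ⟨m, rfl⟩ : ∃ m, r = m + 1 := ⟨r - 1, by omega⟩
  simp only [lineVert]
  split_ifs <;> simp [joinPendant, UnlGraph, Fin.ext_iff] <;> omega

lemma unlGraph_adj_linePos (hgr : g ≤ r) {a b : Fin (r - g) ⊕ Fin g}
    (h : (UnlGraph r g).Adj a b) :
    linePos r g a + 1 = linePos r g b ∨ linePos r g b + 1 = linePos r g a ∨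
      (linePos r g a = r - g + 1 ∧ linePos r g b = r) ∨
      (linePos r g a = r ∧ linePos r g b = r - g + 1) := by
  rcases a with i | i <;> rcases b with j | j <;>
    simp [UnlGraph, linePos, Fin.ext_iff] at h ⊢ <;> omega

lemma reachable_lineVert (hgr : g < r) {m : ℕ} (hm : m ≤ r) :
    (joinPendant H u r g).Reachable (lineVert u r g 0) (lineVert u r g m) := by
  obtain ⟨p, -⟩ :=
    exists_walk_length_of_adj_succ _ (fun _ => adj_lineVert_succ hgr) m.zero_le hm
  exact p.reachable

lemma connected (hH : H.Connected) (hgr : g < r) : (joinPendant H u r g).Connected := by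
  have reach : ∀ v, (joinPendant H u r g).Reachable (.inl u) v := by
    rintro (x | a)
    · exact (hH u x).map inlHom
    · rw [← lineVert_linePos a]
      exact reachable_lineVert hgr (linePos_mem_Icc hgr.le a).2
  have : Nonempty (V ⊕ (Fin (r - g) ⊕ Fin g)) := ⟨.inl u⟩
  exact ⟨fun a b => (reach a).symm.trans (reach b)⟩

def linePotential (r g : ℕ) (w : V → ℕ) (f : ℕ → ℕ) : V ⊕ (Fin (r - g) ⊕ Fin g) → ℕ :=
  Sum.elim w (f ∘ linePos r g)

lemma linePotential_adj_le (w : V → ℕ) (f : ℕ → ℕ) (hgr : g ≤ r)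
    (hw : ∀ x y, H.Adj x y → w x ≤ w y + 1) (hu : w u = f 0)
    (hf : ∀ m < r, f m ≤ f (m + 1) + 1 ∧ f (m + 1) ≤ f m + 1)
    (hchord : f (r - g + 1) ≤ f r + 1 ∧ f r ≤ f (r - g + 1) + 1)
    {a b : V ⊕ (Fin (r - g) ⊕ Fin g)} (h : (joinPendant H u r g).Adj a b) :
    linePotential r g w f a ≤ linePotential r g w f b + 1 := by
  rcases a with x | a <;> rcases b with y | b <;>
    simp only [joinPendant, fromRel_adj, ne_eq, Sum.inl.injEq, Sum.inr.injEq, reduceCtorEq,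
      not_false_eq_true, true_and, or_false, false_or] at h <;>
    simp only [linePotential, Sum.elim_inl, Sum.elim_inr, Function.comp_apply]
  · exact h.2.elim (hw x y) (hw x y ∘ Adj.symm)
  · obtain ⟨rfl, i, rfl, hi⟩ : x = u ∧ ∃ i, b = .inl i ∧ (i : ℕ) = 0 := by
      rcases b with i | j <;> simp_all
    simp only [linePos, Sum.elim_inl, hi, hu]
    exact (hf 0 (by omega)).1
  · obtain ⟨rfl, i, rfl, hi⟩ : y = u ∧ ∃ i, a = .inl i ∧ (i : ℕ) = 0 := by
      rcases a with i | j <;> simp_all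
    simp only [linePos, Sum.elim_inl, hi, hu]
    exact (hf 0 (by omega)).2
  · obtain ⟨ha₁, ha₂⟩ := linePos_mem_Icc hgr a
    obtain ⟨hb₁, hb₂⟩ := linePos_mem_Icc hgr b
    rcases unlGraph_adj_linePos hgr (h.2.elim id Adj.symm) with e | e | ⟨ea, eb⟩ | ⟨ea, eb⟩
    · rw [← e]; exact (hf _ (by omega)).1
    · rw [← e]; exact (hf _ (by omega)).2
    · rw [ea, eb]; exact hchord.1
    · rw [ea, eb]; exact hchord.2

lemma linePotential_le_add_dist (hH : H.Connected) (hgr : g < r) (w : V → ℕ) (f : ℕ → ℕ)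
    (hw : ∀ x y, H.Adj x y → w x ≤ w y + 1) (hu : w u = f 0)
    (hf : ∀ m < r, f m ≤ f (m + 1) + 1 ∧ f (m + 1) ≤ f m + 1)
    (hchord : f (r - g + 1) ≤ f r + 1 ∧ f r ≤ f (r - g + 1) + 1)
    (v t : V ⊕ (Fin (r - g) ⊕ Fin g)) :
    linePotential r g w f v ≤ linePotential r g w f t + (joinPendant H u r g).dist v t :=
  le_add_dist_of_adj_le _ (fun _ _ => linePotential_adj_le w f hgr.le hw hu hf hchord)
    ((connected hH hgr).preconnected v t)

lemma dist_lineVert_le (hgr : g < r) {i j : ℕ} (hij : i ≤ j) (hj : j ≤ r) :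
    (joinPendant H u r g).dist (lineVert u r g i) (lineVert u r g j) ≤ j - i :=
  dist_le_of_adj_succ _ (fun _ => adj_lineVert_succ hgr) hij hj

lemma dist_lineVert_last_le (hg : 3 ≤ g) (hgr : g < r) {m : ℕ} (hm : m ≤ r) :
    (joinPendant H u r g).dist (lineVert u r g m) (lineVert u r g r) ≤
      (m - (r - g + 1)) + (r - g + 1 - m) + 1 := by
  have hchord := (adj_chord (H := H) (u := u) hg hgr.le)
  refine (hchord.reachable.dist_triangle_right _).trans ?_
  rw [dist_eq_one_iff_adj.mpr hchord]
  rcases le_total m (r - g + 1) with h | h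
  · have := dist_lineVert_le (H := H) (u := u) hgr h (by omega)
    omega
  · have := dist_lineVert_le (H := H) (u := u) hgr h hm
    rw [dist_comm] at this
    omega

lemma dist_lineVert_le_max (hg : 3 ≤ g) (hgr : g < r) {m n : ℕ} (hm : m ≤ r) (hn : 1 ≤ n)
    (hnr : n ≤ r) :
    (joinPendant H u r g).dist (lineVert u r g m) (lineVert u r g n) ≤
      max (m - 1) (r - 1 - m) := by
  rcases le_total n m with h | h
  · rw [dist_comm]
    have := dist_lineVert_le (H := H) (u := u) hgr h hm
    omega
  rcases hnr.lt_or_eq with h' | rfl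
  · have := dist_lineVert_le (H := H) (u := u) hgr h hnr
    omega
  · have := dist_lineVert_last_le (H := H) (u := u) hg hgr hm
    omega

lemma le_dist_inl (hH : H.Connected) (hr : 3 < r) (w : V) (v : V ⊕ (Fin (r - 3) ⊕ Fin 3)) :
    Sum.elim (H.dist · w) (fun a => H.dist u w + min (linePos r 3 a) (r - 1)) v ≤
      (joinPendant H u r 3).dist v (.inl w) := by
  have := linePotential_le_add_dist (u := u) hH hr (H.dist · w)
    (fun m => H.dist u w + min m (r - 1))
    (fun _ _ h => dist_le_dist_add_one_of_adj w h) (by simp) (fun _ _ => by omega) (by omega)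
    v (.inl w)
  simpa [linePotential, Function.comp_def] using this

lemma le_dist_lineVert_sub_one (hH : H.Connected) (hr : 3 < r)
    (v : V ⊕ (Fin (r - 3) ⊕ Fin 3)) :
    Sum.elim (H.dist · u + (r - 1)) (fun a => r - 1 - linePos r 3 a) v ≤
      (joinPendant H u r 3).dist v (lineVert u r 3 (r - 1)) := by
  obtain ⟨t, ht, hpos⟩ := exists_lineVert_eq_inr (u := u) (g := 3) (show r - 2 < r by omega)
  rw [show r - 1 = r - 2 + 1 by omega, ht]
  have := linePotential_le_add_dist (u := u) hH hr (H.dist · u + (r - 2 + 1))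
    (fun m => r - 2 + 1 - m)
    (fun _ _ h => by have := dist_le_dist_add_one_of_adj u h; omega) (by simp)
    (fun _ _ => by omega) (by omega) v (.inr t)
  simpa [linePotential, Function.comp_def, hpos] using this

variable [Fintype V]

lemma ecc_inl_le (hH : H.Connected) (hg : 3 ≤ g) (hgr : g < r) (x : V) :
    ecc (joinPendant H u r g) (.inl x) ≤ max (ecc H x) (H.dist x u + (r - 1)) := by
  have : Nonempty V := ⟨x⟩
  refine ecc_le_of_forall_dist_le fun t => ?_
  rcases t with y | b
  · exact (dist_map_le inlHom (hH x y)).trans ((dist_le_ecc x y).trans (le_max_left _ _))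
  · refine ((connected hH hgr).dist_triangle (v := lineVert u r g 0)).trans ?_
    have hx := dist_map_le (inlHom (u := u) (r := r) (g := g)) (hH x u)
    have hb := linePos_mem_Icc hgr.le b
    have hub := dist_lineVert_le_max (H := H) (u := u) hg hgr r.zero_le hb.1 hb.2
    rw [lineVert_linePos] at hub
    exact le_max_of_le_right (add_le_add hx (by simpa using hub))

lemma ecc_lineVert_le (hH : H.Connected) (hg : 3 ≤ g) (hgr : g < r) {m : ℕ} (hm : m ≤ r) :
    ecc (joinPendant H u r g) (lineVert u r g m) ≤
      max (ecc H u + (joinPendant H u r g).dist (lineVert u r g m) (lineVert u r g 0))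
        (max (m - 1) (r - 1 - m)) := by
  have : Nonempty V := ⟨u⟩
  refine ecc_le_of_forall_dist_le fun t => ?_
  rcases t with y | b
  · refine ((connected hH hgr).dist_triangle (v := lineVert u r g 0)).trans ?_
    have hy := (dist_map_le (inlHom (u := u) (r := r) (g := g)) (hH u y)).trans
      (dist_le_ecc u y)
    exact le_max_of_le_left (by rw [add_comm]; exact Nat.add_le_add_right hy _)
  · have hb := linePos_mem_Icc hgr.le b
    rw [← lineVert_linePos b]
    exact le_max_of_le_right (dist_lineVert_le_max hg hgr hm hb.1 hb.2)

lemma le_ecc_inl (hH : H.Connected) (hr : 3 < r) (x : V) :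
    max (ecc H x) (H.dist x u + (r - 1)) ≤ ecc (joinPendant H u r 3) (.inl x) := by
  have : Nonempty V := ⟨x⟩
  refine max_le (ecc_le_of_forall_dist_le fun y => ?_) ?_
  · exact (le_dist_inl hH hr y (.inl x)).trans (dist_le_ecc _ _)
  · exact (le_dist_lineVert_sub_one hH hr (.inl x)).trans (dist_le_ecc _ _)

lemma le_ecc_lineVert (hH : H.Connected) (hr : 3 < r) {m : ℕ} (hm : 1 ≤ m) (hmr : m ≤ r) :
    max (ecc H u + min m (r - 1)) (r - 1 - m) ≤
      ecc (joinPendant H u r 3) (lineVert u r 3 m) := by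
  have : Nonempty V := ⟨u⟩
  obtain ⟨w, hw⟩ := exists_dist_eq_ecc (G := H) u
  obtain ⟨a, ha, hpos⟩ := exists_lineVert_eq_inr (u := u) (g := 3) (show m - 1 < r by omega)
  rw [Nat.sub_add_cancel hm] at ha hpos
  rw [ha]
  refine max_le ?_ ?_
  · have := le_dist_inl (u := u) hH hr w (.inr a)
    simp only [Sum.elim_inr, hpos, hw] at this
    exact this.trans (dist_le_ecc _ _)
  · have := le_dist_lineVert_sub_one (u := u) hH hr (.inr a)
    simp only [Sum.elim_inr, hpos] at this
    exact this.trans (dist_le_ecc _ _)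

lemma totalEcc_eq (hgr : g ≤ r) :
    totalEcc (joinPendant H u r g) = ∑ x, ecc (joinPendant H u r g) (.inl x) +
      ∑ m ∈ range r, ecc (joinPendant H u r g) (lineVert u r g (m + 1)) := by
  rw [totalEcc, Fintype.sum_sum_type, ← sum_linePos hgr fun m => ecc _ (lineVert u r g m)]
  simp only [lineVert_linePos]

lemma ecc_lineVert_le_triangle (hH : H.Connected) (hg : 3 ≤ g) (hgr : g < r) {m : ℕ}
    (hm : 1 ≤ m) (hmr : m < r) :
    ecc (joinPendant H u r g) (lineVert u r g m) ≤
      ecc (joinPendant H u r 3) (lineVert u r 3 m) := by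
  have hup := ecc_lineVert_le (u := u) hH hg hgr hmr.le
  have hline := dist_lineVert_le (H := H) (u := u) hgr m.zero_le hmr.le
  rw [dist_comm] at hline
  refine hup.trans (le_trans ?_ (le_ecc_lineVert hH (by omega) hm hmr.le))
  simp only [max_le_iff, le_max_iff]
  omega

lemma ecc_lineVert_last_lt_triangle (hH : H.Connected) (hg : 4 ≤ g) (hgr : g < r)
    (hD : 1 ≤ ecc H u) :
    ecc (joinPendant H u r g) (lineVert u r g r) <
      ecc (joinPendant H u r 3) (lineVert u r 3 r) := by
  have hup := ecc_lineVert_le (u := u) hH (by omega) hgr le_rfl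
  have hlast := dist_lineVert_last_le (H := H) (u := u) (by omega) hgr r.zero_le
  rw [dist_comm] at hlast
  refine hup.trans_lt (lt_of_lt_of_le ?_ (le_ecc_lineVert hH (by omega) (by omega) le_rfl))
  simp only [max_lt_iff, lt_max_iff]
  omega

end JoinPendant

theorem stmt5 {V : Type*} [Fintype V] (H : SimpleGraph V) (hH : H.Connected)
    (hV : 2 ≤ Fintype.card V) (u : V) (r g : ℕ) (hg : 4 ≤ g) (hrg : g < r) :
    totalEcc (joinPendant H u r g) < totalEcc (joinPendant H u r 3) := by
  have : Nontrivial V := Fintype.one_lt_card_iff_nontrivial.mp hV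
  have hD : 1 ≤ ecc H u := one_le_ecc hH u
  have hr : 3 < r := by omega
  rw [JoinPendant.totalEcc_eq hrg.le, JoinPendant.totalEcc_eq hr.le]
  refine add_lt_add_of_le_of_lt (sum_le_sum fun x _ => ?_) ?_
  · exact (JoinPendant.ecc_inl_le hH (by omega) hrg x).trans (JoinPendant.le_ecc_inl hH hr x)
  refine sum_lt_sum (fun m hm => ?_) ⟨r - 1, by simp; omega, ?_⟩
  · rcases Nat.lt_or_eq_of_le (mem_range.mp hm) with hlt | heq
    · exact JoinPendant.ecc_lineVert_le_triangle hH (by omega) hrg m.succ_pos hlt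
    · rw [show m + 1 = r from heq]
      exact (JoinPendant.ecc_lineVert_last_lt_triangle hH hg hrg hD).le
  · rw [Nat.sub_add_cancel (by omega)]
    exact JoinPendant.ecc_lineVert_last_lt_triangle hH hg hrg hD
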